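/- arXiv:0712.2022 — 2 statements merged into one kernel-verified Lean document; each statement's English description precedes it below -/
import Mathlib

section
/- For positive integers N and q, N lies in the Hasse interval [q+1-2√q, q+1+2√q] if and only if q lies in the Hasse interval [N+1-2√N, N+1+2√N]. -/
/-!
Writing `x = √q` and `y = √N`, the Hasse bounds read `(x - 1)² ≤ y² ≤ (x + 1)²`, i.e.
`|x - 1| ≤ y ≤ x + 1`. This says that `x`, `y` and `1` satisfy the triangle inequalities,
`|x - y| ≤ 1 ≤ x + y`, a condition symmetric in `x` and `y`.
-/

lemma sub_one_sq_le_sq_le_add_one_sq_iff {x y : ℝ} (hx : 0 ≤ x) (hy : 0 ≤ y) :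
    ((x - 1) ^ 2 ≤ y ^ 2 ∧ y ^ 2 ≤ (x + 1) ^ 2) ↔ (|x - y| ≤ 1 ∧ 1 ≤ x + y) := by
  rw [sq_le_sq, sq_le_sq, abs_of_nonneg hy, abs_of_nonneg (by linarith : 0 ≤ x + 1), abs_le,
    abs_le]
  constructor <;> rintro ⟨⟨h₁, h₂⟩, h₃⟩ <;> exact ⟨⟨by linarith, by linarith⟩, by linarith⟩

lemma mem_hasse_interval_iff {a b : ℝ} (ha : 0 ≤ a) (hb : 0 ≤ b) :
    (a + 1 - 2 * √a ≤ b ∧ b ≤ a + 1 + 2 * √a) ↔ (|√a - √b| ≤ 1 ∧ 1 ≤ √a + √b) := by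
  have hlower : a + 1 - 2 * √a = (√a - 1) ^ 2 := by ring_nf; rw [Real.sq_sqrt ha]; ring
  have hupper : a + 1 + 2 * √a = (√a + 1) ^ 2 := by ring_nf; rw [Real.sq_sqrt ha]; ring
  conv_lhs => rw [hlower, hupper, ← Real.sq_sqrt hb]
  exact sub_one_sq_le_sq_le_add_one_sq_iff (Real.sqrt_nonneg a) (Real.sqrt_nonneg b)

theorem hasse_interval_symm_general (N q : ℕ) :
    ((q : ℝ) + 1 - 2 * Real.sqrt q ≤ (N : ℝ) ∧ (N : ℝ) ≤ (q : ℝ) + 1 + 2 * Real.sqrt q) ↔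
    ((N : ℝ) + 1 - 2 * Real.sqrt N ≤ (q : ℝ) ∧ (q : ℝ) ≤ (N : ℝ) + 1 + 2 * Real.sqrt N) := by
  rw [mem_hasse_interval_iff q.cast_nonneg N.cast_nonneg,
    mem_hasse_interval_iff N.cast_nonneg q.cast_nonneg, abs_sub_comm, add_comm (√(q : ℝ))]

/-- For positive integers `N` and `q`, `N` lies in the Hasse interval
`[q+1-2√q, q+1+2√q]` if and only if `q` lies in `[N+1-2√N, N+1+2√N]`. -/
theorem hasse_interval_symm (N q : ℕ) (hN : 0 < N) (hq : 0 < q) :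
    ((q : ℝ) + 1 - 2 * Real.sqrt q ≤ (N : ℝ) ∧ (N : ℝ) ≤ (q : ℝ) + 1 + 2 * Real.sqrt q) ↔
    ((N : ℝ) + 1 - 2 * Real.sqrt N ≤ (q : ℝ) ∧ (q : ℝ) ≤ (N : ℝ) + 1 + 2 * Real.sqrt N) :=
  hasse_interval_symm_general N q
end

section
/- Let E be an elliptic curve over a finite field F_p with p prime, and let N be a prime with N > (√p + 1)². If there exists a point P ∈ E(F_p) with P ≠ 0 and N·P = 0, then E(F_p) has exactly N elements. -/
/-!
Hasse's bound is not needed: over a finite domain with `q` elements a Weierstrass equation has at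
most two solutions `y` for each `x`, so there are at most `2q + 1` points. Since
`N > (√p + 1)² > p + 1`, the group order lies below `2N`, and it is a nonzero multiple of `N`
because `N` is the order of `P`; hence it equals `N`.
-/

open Polynomial WeierstrassCurve

namespace WeierstrassCurve.Affine

variable {R : Type*} [CommRing R] [IsDomain R] (W : Affine R)

theorem card_equation_fiber_le_two (x : R) : Nat.card {y // W.Equation x y} ≤ 2 := by
  classical
  let f : R[X] := W.polynomial.map (evalRingHom x)
  have hf : f.Monic := W.monic_polynomial.map _
  have hsub : {y | W.Equation x y} ⊆ (f.roots.toFinset : Set R) := fun y hy => by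
    have hroot : f.eval y = 0 := (map_evalRingHom_eval x y _).trans hy
    simpa [mem_roots hf.ne_zero] using hroot
  calc Nat.card {y // W.Equation x y}
      ≤ Nat.card (f.roots.toFinset : Set R) := Nat.card_mono (Finset.finite_toSet _) hsub
    _ ≤ Multiset.card f.roots := by
      rw [Nat.card_coe_set_eq, Set.ncard_coe_finset]
      exact f.roots.toFinset_card_le
    _ ≤ f.natDegree := f.card_roots'
    _ = 2 := (W.monic_polynomial.natDegree_map _).trans W.natDegree_polynomial

theorem card_equation_le [Fintype R] :
    Nat.card {xy : R × R // W.Equation xy.1 xy.2} ≤ 2 * Nat.card R :=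
  calc Nat.card {xy : R × R // W.Equation xy.1 xy.2}
      = ∑ x, Nat.card {y // W.Equation x y} := by
        rw [Nat.card_congr (Equiv.subtypeProdEquivSigmaSubtype _), Nat.card_sigma]
    _ ≤ Finset.univ.card • 2 :=
        Finset.sum_le_card_nsmul _ _ _ fun x _ => W.card_equation_fiber_le_two x
    _ = 2 * Nat.card R := by
        rw [smul_eq_mul, mul_comm, Finset.card_univ, Nat.card_eq_fintype_card]

theorem card_point_le [Finite R] : Nat.card W.Point ≤ 2 * Nat.card R + 1 := by
  have := Fintype.ofFinite R
  have hsmooth : Nat.card {xy : R × R // W.Nonsingular xy.1 xy.2} ≤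
      Nat.card {xy : R × R // W.Equation xy.1 xy.2} :=
    Nat.card_le_card_of_injective _ (Subtype.impEmbedding _ _ fun _ h => h.1).injective
  calc Nat.card W.Point
      = Nat.card {xy : R × R // W.Nonsingular xy.1 xy.2} + 1 := by
        rw [Nat.card_congr W.nonsingularPointEquiv]
        exact Finite.card_option
    _ ≤ 2 * Nat.card R + 1 := by
        gcongr
        exact hsmooth.trans W.card_equation_le

end WeierstrassCurve.Affine

theorem card_eq_prime_of_torsion_point_general (p N : ℕ) [Fact p.Prime] (hN : N.Prime)
    (W : Affine (ZMod p)) [Fintype W.Point]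
    (hNp : (Real.sqrt p + 1) ^ 2 < (N : ℝ))
    (h : ∃ P : W.Point, P ≠ 0 ∧ N • P = 0) :
    Fintype.card W.Point = N := by
  obtain ⟨P, hP0, hPN⟩ := h
  have : Fact N.Prime := ⟨hN⟩
  have hdvd : N ∣ Nat.card W.Point := addOrderOf_eq_prime hPN hP0 ▸ addOrderOf_dvd_natCard P
  have hpN : p + 1 < N := by
    have : (p : ℝ) + 1 ≤ (Real.sqrt p + 1) ^ 2 := by
      nlinarith [Real.sq_sqrt (Nat.cast_nonneg p), Real.sqrt_nonneg p]
    exact_mod_cast this.trans_lt hNp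
  have hle : Nat.card W.Point ≤ 2 * p + 1 := by simpa using W.card_point_le
  rw [← Nat.card_eq_fintype_card]
  exact Nat.eq_of_dvd_of_lt_two_mul Nat.card_pos.ne' hdvd (by omega)

/-- Let `E` be an elliptic curve over `F_p` with `p` prime, and let `N` be a prime with
`N > (√p + 1)²`. If there is a point `P ≠ 0` on `E` with `N·P = 0`, then `E(F_p)` has
exactly `N` elements. -/
theorem card_eq_prime_of_torsion_point (p N : ℕ) [Fact p.Prime] (hN : N.Prime)
    (W : Affine (ZMod p)) [W.IsElliptic] [Fintype W.Point]
    (hNp : (Real.sqrt p + 1) ^ 2 < (N : ℝ))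
    (h : ∃ P : W.Point, P ≠ 0 ∧ N • P = 0) :
    Fintype.card W.Point = N :=
  card_eq_prime_of_torsion_point_general p N hN W hNp h
end
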